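/- arXiv:1308.4056 — 2 statements merged into one kernel-verified Lean document; each statement's English description precedes it below -/
import Mathlib

section
/- Let n = 2^k with k > 1 and let q be odd. Then the sign of the permutation of {±1}\(Z/nZ) induced by multiplication by q equals the Jacobi symbol (2^k / q) = (2/q)^k. -/
/-!
Induction on `k`, starting from `k = 2`, where every unit of `ℤ/4` is `±1` and the permutation
is trivial. The classes of `ℤ/2^(k+1)` split into the even ones, which doubling identifies
equivariantly with the classes of `ℤ/2^k`, and the odd ones, each of which contains exactly one
unit `≡ 1 mod 4`. Since `q` and `-q` induce the same permutation we may take `q ≡ 1 mod 4`; on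
the odd classes `q` then acts by left multiplication in the group `S` of units `≡ 1 mod 4`. This
group is cyclic of order `2^(k-1)`, generated by `5`, and left multiplication by `5` is a single
cycle of even length. So `s ↦ sign (mulLeft s)` and `χ₈` are characters of `S` that agree at `5`,
and each step of the induction contributes the factor `χ₈ q = (2/q)`.
-/

open scoped Classical

def negSetoid (n : ℕ) : Setoid (ZMod n) where
  r x y := x = y ∨ x = -y
  iseqv := by
    refine ⟨fun x => Or.inl rfl, ?_, ?_⟩
    · rintro x y (rfl | rfl)
      · exact Or.inl rfl
      · exact Or.inr (neg_neg _).symm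
    · rintro x y z (rfl | rfl) h2 <;> rcases h2 with rfl | h2 <;> simp_all

open Equiv Equiv.Perm

namespace Equiv.Perm

variable {α β γ : Type*} [Fintype α] [DecidableEq α] [Fintype β] [DecidableEq β]
  [Fintype γ] [DecidableEq γ]

theorem sign_eq_mul_of_semiconj_sumMap (e : β ⊕ γ ≃ α) (σ : Perm α) (τ : Perm β) (ρ : Perm γ)
    (h : Function.Semiconj e (Sum.map τ ρ) σ) : sign σ = sign τ * sign ρ := by
  have : σ = e.permCongr (τ.sumCongr ρ) := by
    ext a
    obtain ⟨x, rfl⟩ := e.surjective a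
    simp [permCongr_apply, h x]
  rw [this, sign_permCongr, sign_sumCongr]

theorem sign_mulLeft_of_zpowers_eq_top {G : Type*} [Group G] [Fintype G] [DecidableEq G]
    {g : G} (hg : Subgroup.zpowers g = ⊤) (hG : Even (Nat.card G)) :
    sign (Equiv.mulLeft g) = -1 := by
  have hg1 : g ≠ 1 := by
    rintro rfl
    rw [← Subgroup.card_top, ← hg, Nat.card_zpowers, orderOf_one] at hG
    exact Nat.not_even_one hG
  have hfix : ∀ x, Equiv.mulLeft g x ≠ x := fun x hx =>
    hg1 (mul_right_cancel (hx.trans (one_mul x).symm))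
  have hcycle : IsCycle (Equiv.mulLeft g) := by
    refine ⟨1, hfix 1, fun y _ => ?_⟩
    obtain ⟨i, rfl⟩ := Subgroup.mem_zpowers_iff.mp (hg ▸ Subgroup.mem_top y)
    exact ⟨i, by simp [zpow_mulLeft]⟩
  have hsupp : (Equiv.mulLeft g).support = Finset.univ :=
    Finset.eq_univ_iff_forall.mpr fun x => mem_support.mpr (hfix x)
  rw [hcycle.sign, hsupp, Finset.card_univ, ← Nat.card_eq_fintype_card, hG.neg_one_pow]

end Equiv.Perm

theorem negSetoid.mk_eq_mk_iff {n : ℕ} {x y : ZMod n} :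
    Quotient.mk (negSetoid n) x = Quotient.mk (negSetoid n) y ↔ x = y ∨ x = -y :=
  Quotient.eq

def negMulPerm {n : ℕ} (u : (ZMod n)ˣ) : Perm (Quotient (negSetoid n)) :=
  Quotient.congr (Units.mulLeft u) fun a b => by
    change a = b ∨ a = -b ↔ u * a = u * b ∨ u * a = -(u * b)
    rw [← mul_neg, Units.mul_right_inj, Units.mul_right_inj]

@[simp]
theorem negMulPerm_mk {n : ℕ} (u : (ZMod n)ˣ) (x : ZMod n) :
    negMulPerm u (Quotient.mk _ x) = Quotient.mk _ (u * x) :=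
  rfl

theorem negMulPerm_one (n : ℕ) : negMulPerm (1 : (ZMod n)ˣ) = 1 := by
  ext c
  induction c using Quotient.ind
  simp

theorem negMulPerm_neg {n : ℕ} (u : (ZMod n)ˣ) : negMulPerm (-u) = negMulPerm u := by
  ext c
  induction c using Quotient.ind
  simp [negSetoid.mk_eq_mk_iff]

theorem negMulPerm_eq_one_of_four (u : (ZMod 4)ˣ) : negMulPerm u = 1 := by
  obtain rfl | rfl : u = 1 ∨ u = -1 := by revert u; decide
  · exact negMulPerm_one 4
  · rw [negMulPerm_neg, negMulPerm_one]

theorem isUnit_intCast_of_odd (k : ℕ) {a : ℤ} (ha : Odd a) : IsUnit (a : ZMod (2 ^ k)) := by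
  rw [ZMod.coe_int_isUnit_iff_isCoprime]
  push_cast
  exact (Int.isCoprime_two_left.mpr ha).pow_left

-- The codomain is `ZMod (m * 2)` rather than `ZMod (2 * m)` because `2 ^ (k + 1)` unfolds
-- definitionally to `2 ^ k * 2`.
def doubleHom (m : ℕ) : ZMod m →+ ZMod (m * 2) :=
  ZMod.lift m ⟨(AddMonoidHom.mulLeft 2).comp (Int.castAddHom _), by
    simp only [AddMonoidHom.coe_comp, Function.comp_apply, Int.coe_castAddHom,
      AddMonoidHom.coe_mulLeft, Int.cast_natCast]
    have h := ZMod.natCast_self (m * 2)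
    push_cast at h
    linear_combination h⟩

theorem doubleHom_intCast (m : ℕ) (b : ℤ) : doubleHom m b = 2 * b :=
  ZMod.lift_coe _ _ _

theorem doubleHom_injective (m : ℕ) : Function.Injective (doubleHom m) := by
  refine (injective_iff_map_eq_zero _).mpr fun x hx => ?_
  obtain ⟨b, rfl⟩ := ZMod.intCast_surjective x
  rw [doubleHom_intCast, ← Int.cast_ofNat, ← Int.cast_mul,
    ZMod.intCast_zmod_eq_zero_iff_dvd] at hx
  rw [ZMod.intCast_zmod_eq_zero_iff_dvd]
  push_cast at hx
  rw [mul_comm] at hx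
  exact (mul_dvd_mul_iff_left two_ne_zero).mp hx

theorem doubleHom_unitsMap_mul (m : ℕ) (u : (ZMod (m * 2))ˣ) (x : ZMod m) :
    doubleHom m (ZMod.unitsMap (dvd_mul_right m 2) u * x) = u * doubleHom m x := by
  obtain ⟨a, ha⟩ := ZMod.intCast_surjective (u : ZMod (m * 2))
  obtain ⟨b, rfl⟩ := ZMod.intCast_surjective x
  rw [ZMod.unitsMap_val, ← ha, ZMod.cast_intCast (dvd_mul_right m 2), ← Int.cast_mul,
    doubleHom_intCast, doubleHom_intCast]
  push_cast
  ring

theorem not_isUnit_doubleHom (m : ℕ) (x : ZMod m) : ¬IsUnit (doubleHom m x) := by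
  intro hx
  obtain ⟨b, rfl⟩ := ZMod.intCast_surjective x
  have h := hx.map (ZMod.castHom (dvd_mul_left 2 m) (ZMod 2))
  rw [doubleHom_intCast, map_mul, map_ofNat, show (2 : ZMod 2) = 0 from rfl, zero_mul] at h
  exact not_isUnit_zero h

theorem exists_doubleHom_eq_or_isUnit (k : ℕ) (x : ZMod (2 ^ (k + 1))) :
    (∃ y, doubleHom (2 ^ k) y = x) ∨ IsUnit x := by
  obtain ⟨a, rfl⟩ := ZMod.intCast_surjective x
  obtain ⟨b, rfl | rfl⟩ := Int.even_or_odd' a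
  · exact Or.inl ⟨b, by rw [doubleHom_intCast]; push_cast; rfl⟩
  · exact Or.inr (isUnit_intCast_of_odd (k + 1) ⟨b, rfl⟩)

def doubleClass (m : ℕ) : Quotient (negSetoid m) → Quotient (negSetoid (m * 2)) :=
  Quotient.map (doubleHom m) fun a b h => by
    rcases h with rfl | rfl
    · exact Or.inl rfl
    · exact Or.inr (map_neg _ _)

@[simp]
theorem doubleClass_mk (m : ℕ) (x : ZMod m) :
    doubleClass m (Quotient.mk _ x) = Quotient.mk _ (doubleHom m x) :=
  rfl

theorem doubleClass_injective (m : ℕ) : Function.Injective (doubleClass m) := by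
  rintro ⟨x⟩ ⟨y⟩ h
  change doubleClass m (Quotient.mk _ x) = doubleClass m (Quotient.mk _ y) at h
  rw [doubleClass_mk, doubleClass_mk, negSetoid.mk_eq_mk_iff, ← map_neg,
    (doubleHom_injective m).eq_iff, (doubleHom_injective m).eq_iff] at h
  exact negSetoid.mk_eq_mk_iff.mpr h

theorem doubleClass_negMulPerm (m : ℕ) (u : (ZMod (m * 2))ˣ) (c : Quotient (negSetoid m)) :
    doubleClass m (negMulPerm (ZMod.unitsMap (dvd_mul_right m 2) u) c) =
      negMulPerm u (doubleClass m c) := by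
  induction c using Quotient.ind
  simp [doubleHom_unitsMap_mul]

theorem doubleClass_ne_mk_of_isUnit (m : ℕ) (c : Quotient (negSetoid m)) {x : ZMod (m * 2)}
    (hx : IsUnit x) : doubleClass m c ≠ Quotient.mk _ x := by
  induction c using Quotient.ind
  intro hcx
  rcases negSetoid.mk_eq_mk_iff.mp hcx with hcx | hcx
  · exact not_isUnit_doubleHom _ _ (hcx ▸ hx)
  · exact not_isUnit_doubleHom _ _ (hcx ▸ hx.neg)

def unitsOneModFour {n : ℕ} (h : 4 ∣ n) : Subgroup (ZMod n)ˣ :=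
  (ZMod.unitsMap h).ker

theorem mem_unitsOneModFour_of_intCast {n : ℕ} (h : 4 ∣ n) {u : (ZMod n)ˣ} {a : ℤ}
    (hu : (u : ZMod n) = a) (ha : a % 4 = 1) : u ∈ unitsOneModFour h := by
  rw [unitsOneModFour, MonoidHom.mem_ker, Units.ext_iff, ZMod.unitsMap_val, hu,
    ZMod.cast_intCast h, ← ZMod.intCast_mod, show a % ((4 : ℕ) : ℤ) = 1 from ha, Int.cast_one,
    Units.val_one]

theorem exists_unitsOneModFour_mk_eq {n : ℕ} (h : 4 ∣ n) (v : (ZMod n)ˣ) :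
    ∃ s : unitsOneModFour h, Quotient.mk (negSetoid n) ((s : (ZMod n)ˣ) : ZMod n) =
      Quotient.mk _ (v : ZMod n) := by
  obtain hv | hv : ZMod.unitsMap h v = 1 ∨ ZMod.unitsMap h v = -1 := by
    generalize ZMod.unitsMap h v = w
    revert w
    decide
  · exact ⟨⟨v, hv⟩, rfl⟩
  · refine ⟨⟨-v, ?_⟩, negSetoid.mk_eq_mk_iff.mpr (Or.inr (Units.val_neg v))⟩
    change ZMod.unitsMap h (-v) = 1
    rw [ZMod.unitsMap_def, Units.map_neg, ← ZMod.unitsMap_def, hv, neg_neg]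

theorem unitsOneModFour_mk_injective {n : ℕ} (h : 4 ∣ n) :
    Function.Injective fun s : unitsOneModFour h =>
      Quotient.mk (negSetoid n) ((s : (ZMod n)ˣ) : ZMod n) := by
  intro s t hst
  rcases negSetoid.mk_eq_mk_iff.mp hst with hst | hst
  · exact Subtype.ext (Units.ext hst)
  · have hs : ZMod.unitsMap h s = 1 := s.2
    have ht : ZMod.unitsMap h t = 1 := t.2
    have h4 := congrArg (ZMod.castHom h (ZMod 4)) hst
    rw [map_neg, ZMod.castHom_apply, ZMod.castHom_apply, ← ZMod.unitsMap_val h,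
      ← ZMod.unitsMap_val h, hs, ht] at h4
    exact absurd h4 (by decide)

theorem card_unitsOneModFour {i : ℕ} (hi : 2 ≤ i) (h : 4 ∣ 2 ^ i) :
    Nat.card (unitsOneModFour h) = 2 ^ (i - 2) := by
  have hcard := Subgroup.card_mul_index (unitsOneModFour h)
  rw [unitsOneModFour, Subgroup.index_ker,
    MonoidHom.range_eq_top.mpr (ZMod.unitsMap_surjective h), Subgroup.card_top,
    Nat.card_eq_fintype_card (α := (ZMod 4)ˣ), ZMod.card_units_eq_totient,
    Nat.card_eq_fintype_card (α := (ZMod (2 ^ i))ˣ), ZMod.card_units_eq_totient,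
    Nat.totient_prime_pow Nat.prime_two (by omega), show Nat.totient 4 = 2 from rfl,
    show i - 1 = i - 2 + 1 by omega, pow_succ, Nat.add_one_sub_one, mul_one] at hcard
  exact Nat.eq_of_mul_eq_mul_right two_pos hcard

theorem unitsOneModFour_exists_generator_eq_five {i : ℕ} (hi : 2 ≤ i) (h : 4 ∣ 2 ^ i) :
    ∃ g : unitsOneModFour h, ((g : (ZMod (2 ^ i))ˣ) : ZMod (2 ^ i)) = 5 ∧
      Subgroup.zpowers g = ⊤ := by
  have hu : IsUnit (5 : ZMod (2 ^ i)) := by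
    exact_mod_cast isUnit_intCast_of_odd i (by decide : Odd (5 : ℤ))
  refine ⟨⟨hu.unit, mem_unitsOneModFour_of_intCast h (a := 5) (by simp) (by decide)⟩, by simp, ?_⟩
  refine Subgroup.eq_top_of_card_eq _ ?_
  obtain ⟨j, rfl⟩ : ∃ j, i = j + 2 := ⟨i - 2, by omega⟩
  rw [Nat.card_zpowers, card_unitsOneModFour hi, Subgroup.orderOf_mk, ← orderOf_units,
    IsUnit.unit_spec, ZMod.orderOf_five, Nat.add_sub_cancel]

theorem sign_mulLeft_unitsOneModFour {i : ℕ} (hi : 3 ≤ i) (h : 4 ∣ 2 ^ i)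
    (s : unitsOneModFour h) :
    (sign (Equiv.mulLeft s) : ℤ) = ZMod.χ₈ ((s : (ZMod (2 ^ i))ˣ) : ZMod (2 ^ i)).cast := by
  have h8 : 8 ∣ 2 ^ i := (pow_dvd_pow 2 hi : 2 ^ 3 ∣ 2 ^ i)
  let χ : unitsOneModFour h →* ℤˣ :=
    ZMod.χ₈.toUnitHom.comp ((ZMod.unitsMap h8).comp (unitsOneModFour h).subtype)
  have hχ (t : unitsOneModFour h) :
      (χ t : ℤ) = ZMod.χ₈ ((t : (ZMod (2 ^ i))ˣ) : ZMod (2 ^ i)).cast := by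
    simp [χ, ZMod.unitsMap_val]
  obtain ⟨g, hg5, hg⟩ := unitsOneModFour_exists_generator_eq_five (by omega) h
  have hcard : Even (Nat.card (unitsOneModFour h)) := by
    rw [card_unitsOneModFour (by omega)]
    exact (Nat.even_pow' (by omega)).mpr even_two
  have hχg : χ g = -1 := by
    refine Units.ext ?_
    rw [hχ, hg5, ← Nat.cast_ofNat (R := ZMod (2 ^ i)) (n := 5), ZMod.cast_natCast h8]
    rfl
  obtain ⟨j, rfl⟩ := Subgroup.mem_zpowers_iff.mp (hg ▸ Subgroup.mem_top s)
  rw [← hχ, ← zpow_mulLeft, map_zpow, map_zpow, sign_mulLeft_of_zpowers_eq_top hg hcard, hχg]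

theorem sign_negMulPerm_two_pow_succ {k : ℕ} (h : 4 ∣ 2 ^ (k + 1)) {u : (ZMod (2 ^ (k + 1)))ˣ}
    (hu : u ∈ unitsOneModFour h) :
    sign (negMulPerm u) = sign (negMulPerm (ZMod.unitsMap (pow_dvd_pow 2 k.le_succ) u)) *
      sign (Equiv.mulLeft (⟨u, hu⟩ : unitsOneModFour h)) := by
  let ι (s : unitsOneModFour h) : Quotient (negSetoid (2 ^ (k + 1))) :=
    Quotient.mk _ ((s : (ZMod (2 ^ (k + 1)))ˣ) : ZMod (2 ^ (k + 1)))
  have hsurj : Function.Surjective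
      (Sum.elim (γ := Quotient (negSetoid (2 ^ (k + 1)))) (doubleClass (2 ^ k)) ι) := by
    intro c
    induction c using Quotient.ind with | _ x
    rcases exists_doubleHom_eq_or_isUnit k x with ⟨y, rfl⟩ | hx
    · exact ⟨Sum.inl (Quotient.mk _ y), rfl⟩
    · obtain ⟨s, hs⟩ := exists_unitsOneModFour_mk_eq h hx.unit
      exact ⟨Sum.inr s, hs.trans (congrArg _ hx.unit_spec)⟩
  let e :
      Quotient (negSetoid (2 ^ k)) ⊕ unitsOneModFour h ≃ Quotient (negSetoid (2 ^ (k + 1))) :=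
    Equiv.ofBijective _ ⟨(doubleClass_injective _).sumElim (unitsOneModFour_mk_injective h)
      fun c s => doubleClass_ne_mk_of_isUnit _ c (s : (ZMod (2 ^ (k + 1)))ˣ).isUnit, hsurj⟩
  refine sign_eq_mul_of_semiconj_sumMap e _ _ _ ?_
  rintro (c | s)
  · exact doubleClass_negMulPerm _ u c
  · rfl

theorem ZMod.χ₈_neg (a : ZMod 8) : χ₈ (-a) = χ₈ a := by
  revert a
  decide

theorem ZMod.χ₈_natAbs (q : ℤ) : χ₈ (q.natAbs : ZMod 8) = χ₈ (q : ZMod 8) := by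
  rcases Int.natAbs_eq q with h | h
  · conv_rhs => rw [h]
    rw [Int.cast_natCast]
  · conv_rhs => rw [h]
    rw [Int.cast_neg, Int.cast_natCast, χ₈_neg]

theorem sign_negMulPerm_two_pow {k : ℕ} (hk : 2 ≤ k) {q : ℤ} (hq : Odd q)
    {u : (ZMod (2 ^ k))ˣ} (hu : (u : ZMod (2 ^ k)) = q) :
    (sign (negMulPerm u) : ℤ) = ZMod.χ₈ q ^ k := by
  wlog hq4 : q % 4 = 1 generalizing q u
  · have hq2 := Int.odd_iff.mp hq
    have := this hq.neg (u := -u) (by rw [Units.val_neg, hu, Int.cast_neg]) (by omega)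
    rwa [negMulPerm_neg, Int.cast_neg, ZMod.χ₈_neg] at this
  induction k, hk using Nat.le_induction with
  | base =>
    rw [negMulPerm_eq_one_of_four u, map_one, Units.val_one, ZMod.χ₈_int_eq_if_mod_eight]
    split_ifs <;> omega
  | succ k hk ih =>
    have h4 : 4 ∣ 2 ^ (k + 1) := pow_dvd_pow 2 (by omega : 2 ≤ k + 1)
    have h8 : 8 ∣ 2 ^ (k + 1) := pow_dvd_pow 2 (by omega : 3 ≤ k + 1)
    have hu' : (ZMod.unitsMap (pow_dvd_pow 2 k.le_succ) u : ZMod (2 ^ k)) = q := by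
      rw [ZMod.unitsMap_val, hu, ZMod.cast_intCast (pow_dvd_pow 2 k.le_succ)]
    rw [sign_negMulPerm_two_pow_succ h4 (mem_unitsOneModFour_of_intCast h4 hu hq4),
      Units.val_mul, ih hu', sign_mulLeft_unitsOneModFour (by omega) h4, hu,
      ZMod.cast_intCast h8, pow_succ]

/-- Let `n = 2^k` with `k > 1` and let `q` be odd.  Then the sign of the permutation of
`{±1}\(ℤ/nℤ)` induced by multiplication by `q` equals the Jacobi/Kronecker symbol
`(2^k / q) = (2/q)^k`. -/
theorem quot_sign_two_pow
    (k n : ℕ) [NeZero n] (hk : 1 < k) (hn : n = 2 ^ k) (q : ℤ) (hq : Odd q)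
    (σ : Equiv.Perm (Quotient (negSetoid n)))
    (hσ : ∀ x : ZMod n,
      σ (Quotient.mk (negSetoid n) x) = Quotient.mk (negSetoid n) ((q : ZMod n) * x)) :
    (Equiv.Perm.sign σ : ℤ) = jacobiSym (2 ^ k : ℤ) q.natAbs := by
  subst hn
  have hq' := isUnit_intCast_of_odd k hq
  have hσ' : σ = negMulPerm hq'.unit := by
    ext c
    induction c using Quotient.ind
    rw [hσ, negMulPerm_mk, hq'.unit_spec]
  rw [hσ', sign_negMulPerm_two_pow hk hq hq'.unit_spec, jacobiSym.pow_left,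
    jacobiSym.at_two (Int.natAbs_odd.mpr hq), ZMod.χ₈_natAbs]
end

section
/- Let R be an irreducible reduced root system and α ∈ R. Then the reflection s_α, acting on the set {±1}\R of orbits of negation on R, has exactly 1 + (number of roots orthogonal to α)/2 fixed points; consequently, if α is long (including the simply laced case) the sign of s_α on {±1}\R is (-1)^{g}, where g is the dual Coxeter number of R, and if α is short it is (-1)^{g∨}, where g∨ is the dual Coxeter number of the dual root system. -/
open scoped RealInnerProductSpace

variable {V : Type*} [NormedAddCommGroup V] [InnerProductSpace ℝ V] [FiniteDimensional ℝ V]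

/-- A (reduced) root system in a real inner product space: a finite set of nonzero vectors,
closed under the associated reflections, with integral pairings, and reduced. -/
structure RootSystemData (V : Type*) [NormedAddCommGroup V] [InnerProductSpace ℝ V] where
  carrier : Finset V
  ne_zero : ∀ α ∈ carrier, α ≠ 0
  reduced : ∀ α ∈ carrier, ∀ t : ℝ, t • α ∈ carrier → t = 1 ∨ t = -1
  refl_mem : ∀ α ∈ carrier, ∀ β ∈ carrier, β - (2 * ⟪β, α⟫ / ⟪α, α⟫) • α ∈ carrier
  int_pairing : ∀ α ∈ carrier, ∀ β ∈ carrier, ∃ n : ℤ, (2 * ⟪β, α⟫ / ⟪α, α⟫) = (n : ℝ)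

/-- The reflection in the root `α`: the orthogonal reflection in the hyperplane
perpendicular to `α`, as a linear automorphism of `V`. -/
noncomputable def reflRoot (α : V) : V ≃ₗ[ℝ] V :=
  (Submodule.reflection ((ℝ ∙ α)ᗮ)).toLinearEquiv

/-- The automorphism group of a root system: linear automorphisms of `V` preserving the set of
roots. -/
def RootSystemData.aut (Rs : RootSystemData V) : Subgroup (V ≃ₗ[ℝ] V) where
  carrier := {g | ∀ α : V, α ∈ Rs.carrier ↔ g α ∈ Rs.carrier}
  one_mem' := fun α => Iff.rfl
  mul_mem' := by
    intro a b ha hb α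
    exact (hb α).trans (ha (b α))
  inv_mem' := by
    intro a ha α
    constructor
    · intro h
      have := (ha (a⁻¹ α)).mpr
      have h2 : a (a⁻¹ α) = α := a.apply_symm_apply α
      rw [h2] at this
      exact (ha (a⁻¹ α)).mpr (by rwa [h2])
    · intro h
      have h2 : a (a⁻¹ α) = α := a.apply_symm_apply α
      have := (ha (a⁻¹ α)).mp h
      rwa [h2] at this

/-- A system of simple roots (a base) of a root system: a linearly independent subset of the
roots such that every root is a nonnegative or a nonpositive combination of its elements. -/
def RootSystemData.IsSimpleSystem (Rs : RootSystemData V) (Δ : Finset V) : Prop :=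
  ↑Δ ⊆ (Rs.carrier : Set V) ∧
  LinearIndependent ℝ (fun x : {x : V // x ∈ Δ} => x.1) ∧
  ∀ α ∈ Rs.carrier,
    (∃ c : V → ℝ, (∀ β ∈ Δ, 0 ≤ c β) ∧ α = ∑ β ∈ Δ, c β • β) ∨
    (∃ c : V → ℝ, (∀ β ∈ Δ, c β ≤ 0) ∧ α = ∑ β ∈ Δ, c β • β)

/-- Parabolic subgroups of the automorphism group of a root system: for a system of simple
roots `Δ` and a subset `S ⊆ Δ`, the subgroup `A_{S ⊆ Δ} = W_S ⋊ Stab_{Aut(R,Δ)}(S)`, i.e. the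
subgroup generated by the reflections in roots of `S` together with the automorphisms of the
root system stabilising `Δ` and `S` (setwise). -/
def RootSystemData.IsParabolic (Rs : RootSystemData V) (P : Subgroup (V ≃ₗ[ℝ] V)) : Prop :=
  ∃ Δ S : Finset V, Rs.IsSimpleSystem Δ ∧ S ⊆ Δ ∧
    P = Subgroup.closure
      ((fun α => reflRoot α) '' ↑S ∪
        {g | g ∈ Rs.aut ∧ ⇑g '' ↑Δ = ↑Δ ∧ ⇑g '' ↑S = ↑S})

/-- An automorphism of a root system is elliptic if it belongs to no proper parabolic
subgroup of the automorphism group. -/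
def RootSystemData.IsElliptic (Rs : RootSystemData V) (w : V ≃ₗ[ℝ] V) : Prop :=
  ∀ P : Subgroup (V ≃ₗ[ℝ] V), Rs.IsParabolic P → P ≠ Rs.aut → w ∉ P

open scoped Classical

/-- The equivalence relation identifying a root with its negative; the quotient is the orbit
set `{±1}\R`. -/
def negSetoidOn {V : Type*} [NormedAddCommGroup V] [InnerProductSpace ℝ V]
    (S : Finset V) : Setoid {x : V // x ∈ S} where
  r x y := x.1 = y.1 ∨ x.1 = -y.1
  iseqv := by
    refine ⟨fun x => Or.inl rfl, ?_, ?_⟩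
    · rintro x y (h | h)
      · exact Or.inl h.symm
      · exact Or.inr (by rw [h, neg_neg])
    · rintro x y z (h1 | h1) (h2 | h2)
      · exact Or.inl (h1.trans h2)
      · exact Or.inr (h1.trans h2)
      · exact Or.inr (by rw [h1, h2])
      · exact Or.inl (by rw [h1, h2, neg_neg])

/-- A root system is irreducible if it is nonempty and cannot be split into two mutually
orthogonal proper subsets. -/
def RootSystemData.IsIrreducible {V : Type*} [NormedAddCommGroup V] [InnerProductSpace ℝ V]
    (Rs : RootSystemData V) : Prop :=
  Rs.carrier.Nonempty ∧
  ∀ S : Set V, S ⊆ ↑Rs.carrier →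
    (∀ x ∈ S, ∀ y ∈ (↑Rs.carrier : Set V) \ S, ⟪x, y⟫ = 0) →
    S = ∅ ∨ S = ↑Rs.carrier

/-! A root `β` represents an orbit fixed by `s_α` iff `s_α β = β`, i.e. `β ⊥ α`, or
`s_α β = -β`, i.e. `β ∈ ℝα`, which in a reduced system means `β = ±α`. Every orbit of negation
has two elements, so there are `(#{β ⊥ α} + 2) / 2` fixed orbits. As `s_α` is an involution, its
sign is `(-1) ^ k` with `k = (#({±1}\R) - #fixed) / 2 = (#{β not ⊥ α} - 2) / 4`, which is `g - 2`
when `#{β not ⊥ α} = 4g - 6`. -/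

theorem Nat.card_subtype_mem_and {α : Type*} (s : Finset α) (p : α → Prop) [DecidablePred p] :
    Nat.card {a // a ∈ s ∧ p a} = (s.filter p).card := by
  rw [← Nat.card_eq_finsetCard]
  exact Nat.card_congr (Equiv.subtypeEquivRight fun _ => Finset.mem_filter.symm)

theorem Nat.card_subtype_comp_eq_mul {α β : Type*} [Finite α] [Finite β] (f : α → β) {n : ℕ}
    (hf : ∀ b, Nat.card {a // f a = b} = n) (p : β → Prop) :
    Nat.card {a // p (f a)} = n * Nat.card {b // p b} := by
  have := Fintype.ofFinite β
  let e : {a // p (f a)} ≃ Σ b : {b // p b}, {a // f a = b} :=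
    { toFun a := ⟨⟨f a, a.2⟩, a.1, rfl⟩
      invFun x := ⟨x.2.1, by rw [x.2.2]; exact x.1.2⟩
      left_inv _ := rfl
      right_inv := by
        rintro ⟨⟨b, hb⟩, a, ha⟩
        dsimp only at ha
        subst ha
        rfl }
  rw [Nat.card_congr e, Nat.card_sigma, Nat.card_eq_fintype_card]
  simp [hf, mul_comm]

theorem self_ne_neg_of_ne_zero {M : Type*} [AddCommGroup M] [Module ℝ M] {v : M} (hv : v ≠ 0) :
    v ≠ -v := by
  rw [Ne, eq_neg_iff_add_eq_zero, ← two_smul ℝ]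
  simpa using hv

section Reflection

variable {V : Type*} [NormedAddCommGroup V] [InnerProductSpace ℝ V]

theorem reflRoot_reflRoot (α β : V) : reflRoot α (reflRoot α β) = β :=
  Submodule.reflection_reflection _ β

theorem reflRoot_apply_eq_self_iff (α β : V) : reflRoot α β = β ↔ ⟪β, α⟫ = 0 := by
  rw [← real_inner_comm, ← Submodule.mem_orthogonal_singleton_iff_inner_right]
  exact Submodule.reflection_eq_self_iff β

theorem reflRoot_apply_eq_neg_iff (α β : V) : reflRoot α β = -β ↔ β ∈ ℝ ∙ α := by
  change (ℝ ∙ α)ᗮ.reflection β = -β ↔ _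
  rw [Submodule.reflection_orthogonal_apply, neg_inj, Submodule.reflection_eq_self_iff]

end Reflection

namespace RootSystemData

variable {V : Type*} [NormedAddCommGroup V] [InnerProductSpace ℝ V] (Rs : RootSystemData V)

theorem neg_mem {β : V} (hβ : β ∈ Rs.carrier) : -β ∈ Rs.carrier := by
  have hββ : ⟪β, β⟫ ≠ 0 := inner_self_ne_zero.mpr (Rs.ne_zero β hβ)
  convert Rs.refl_mem β hβ β hβ using 1
  rw [mul_div_assoc, div_self hββ, mul_one, two_smul, sub_add_cancel_left]

theorem eq_or_eq_neg_of_mem_span_singleton {α β : V} (hα : α ∈ Rs.carrier) (hβ : β ∈ Rs.carrier)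
    (h : β ∈ ℝ ∙ α) : β = α ∨ β = -α := by
  obtain ⟨t, rfl⟩ := Submodule.mem_span_singleton.mp h
  rcases Rs.reduced α hα t hβ with rfl | rfl
  · exact .inl (one_smul ℝ α)
  · exact .inr (neg_one_smul ℝ α)

theorem reflRoot_apply_eq_self_or_neg_iff {α β : V} (hα : α ∈ Rs.carrier)
    (hβ : β ∈ Rs.carrier) :
    (reflRoot α β = β ∨ reflRoot α β = -β) ↔ (⟪β, α⟫ = 0 ∨ β = α ∨ β = -α) := by
  rw [reflRoot_apply_eq_self_iff, reflRoot_apply_eq_neg_iff]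
  refine or_congr Iff.rfl ⟨Rs.eq_or_eq_neg_of_mem_span_singleton hα hβ, ?_⟩
  rintro (rfl | rfl)
  · exact Submodule.mem_span_singleton_self β
  · exact Submodule.neg_mem _ (Submodule.mem_span_singleton_self _)

theorem card_negSetoidOn_fiber (ω : Quotient (negSetoidOn Rs.carrier)) :
    Nat.card {x // Quotient.mk (negSetoidOn Rs.carrier) x = ω} = 2 := by
  classical
  induction ω using Quotient.ind with | _ y => ?_
  have hpair : ∀ v, v ∈ Rs.carrier ∧ (v = y.1 ∨ v = -y.1) ↔ v ∈ ({y.1, -y.1} : Finset V) := by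
    intro v
    simp only [Finset.mem_insert, Finset.mem_singleton]
    refine ⟨And.right, fun h => ⟨?_, h⟩⟩
    rcases h with rfl | rfl
    exacts [y.2, Rs.neg_mem y.2]
  rw [← Finset.card_pair (self_ne_neg_of_ne_zero (Rs.ne_zero _ y.2)), ← Nat.card_eq_finsetCard]
  exact Nat.card_congr <| (Equiv.subtypeEquivRight fun x => Quotient.eq).trans <|
    (Equiv.subtypeSubtypeEquivSubtypeInter _ _).trans (Equiv.subtypeEquivRight hpair)

theorem card_orthogonal_or_eq_or_eq_neg {α : V} (hα : α ∈ Rs.carrier) :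
    Nat.card {β // β ∈ Rs.carrier ∧ (⟪β, α⟫ = 0 ∨ β = α ∨ β = -α)} =
      Nat.card {β // β ∈ Rs.carrier ∧ ⟪β, α⟫ = 0} + 2 := by
  classical
  have hα0 : α ≠ 0 := Rs.ne_zero α hα
  have hpm : Rs.carrier.filter (fun β => β = α ∨ β = -α) = {α, -α} := by
    ext β
    simp only [Finset.mem_filter, Finset.mem_insert, Finset.mem_singleton]
    refine ⟨And.right, fun h => ⟨?_, h⟩⟩
    rcases h with rfl | rfl
    exacts [hα, Rs.neg_mem hα]
  have hdisj : Disjoint (Rs.carrier.filter (⟪·, α⟫ = 0)) {α, -α} := by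
    simp [Finset.disjoint_insert_right, hα0]
  rw [Nat.card_subtype_mem_and, Nat.card_subtype_mem_and, Finset.filter_or, hpm,
    Finset.card_union_of_disjoint hdisj, Finset.card_pair (self_ne_neg_of_ne_zero hα0)]

theorem card_eq_two_mul_card_negQuotient :
    Rs.carrier.card = 2 * Nat.card (Quotient (negSetoidOn Rs.carrier)) := by
  have h := Nat.card_subtype_comp_eq_mul _ Rs.card_negSetoidOn_fiber (fun _ => True)
  simp only [Nat.card_congr (Equiv.subtypeUnivEquiv fun _ => trivial)] at h
  rwa [Nat.card_eq_finsetCard] at h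

end RootSystemData

theorem reflection_fixed_points_and_sign_on_neg_quotient_general
    {V : Type*} [NormedAddCommGroup V] [InnerProductSpace ℝ V]
    (Rs : RootSystemData V)
    (α : V) (hα : α ∈ Rs.carrier)
    (hinv : ∀ β ∈ Rs.carrier, reflRoot α β ∈ Rs.carrier)
    (σ : Equiv.Perm (Quotient (negSetoidOn Rs.carrier)))
    (hσ : ∀ x : {x : V // x ∈ Rs.carrier},
      σ (Quotient.mk (negSetoidOn Rs.carrier) x) =
        Quotient.mk (negSetoidOn Rs.carrier) ⟨reflRoot α x.1, hinv x.1 x.2⟩)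
    (g gd : ℕ) :
    Nat.card {ω : Quotient (negSetoidOn Rs.carrier) // σ ω = ω} =
        1 + Nat.card {β : V // β ∈ Rs.carrier ∧ ⟪β, α⟫ = 0} / 2 ∧
    ((∀ β ∈ Rs.carrier, ‖β‖ ≤ ‖α‖) →
      Nat.card {β : V // β ∈ Rs.carrier ∧ ⟪β, α⟫ ≠ 0} + 6 = 4 * g →
      Equiv.Perm.sign σ = (-1 : ℤˣ) ^ g) ∧
    ((∃ β ∈ Rs.carrier, ‖α‖ < ‖β‖) →
      Nat.card {β : V // β ∈ Rs.carrier ∧ ⟪β, α⟫ ≠ 0} + 6 = 4 * gd →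
      Equiv.Perm.sign σ = (-1 : ℤˣ) ^ gd) := by
  classical
  have hfix : 2 * Nat.card {ω // σ ω = ω} =
      Nat.card {β : V // β ∈ Rs.carrier ∧ ⟪β, α⟫ = 0} + 2 := by
    rw [← Nat.card_subtype_comp_eq_mul _ Rs.card_negSetoidOn_fiber,
      ← Rs.card_orthogonal_or_eq_or_eq_neg hα]
    refine Nat.card_congr ((Equiv.subtypeEquivRight fun x => ?_).trans
      (Equiv.subtypeSubtypeEquivSubtypeInter _ _))
    rw [hσ, Quotient.eq]
    exact Rs.reflRoot_apply_eq_self_or_neg_iff hα x.2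
  have htotal : Nat.card {β : V // β ∈ Rs.carrier ∧ ⟪β, α⟫ = 0} +
      Nat.card {β : V // β ∈ Rs.carrier ∧ ⟪β, α⟫ ≠ 0} =
        2 * Nat.card (Quotient (negSetoidOn Rs.carrier)) := by
    rw [Nat.card_subtype_mem_and, Nat.card_subtype_mem_and,
      Finset.card_filter_add_card_filter_not, Rs.card_eq_two_mul_card_negQuotient]
  have hsq : σ ^ 2 = 1 := by
    ext ω
    induction ω using Quotient.ind with | _ x => ?_
    rw [sq, Equiv.Perm.mul_apply, hσ, hσ]
    exact Quotient.sound (.inl (reflRoot_reflRoot α x))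
  have hsign : ∀ n, Nat.card {β : V // β ∈ Rs.carrier ∧ ⟪β, α⟫ ≠ 0} + 6 = 4 * n →
      Equiv.Perm.sign σ = (-1) ^ n := by
    intro n hn
    obtain ⟨k, rfl⟩ : ∃ k, n = k + 2 := ⟨n - 2, by omega⟩
    rw [Equiv.Perm.sign_of_pow_two_eq_one hsq, ← Nat.card_eq_fintype_card,
      ← Nat.card_eq_fintype_card, pow_add, neg_one_sq, mul_one]
    congr 1
    change (_ - Nat.card {ω // σ ω = ω}) / 2 = k
    omega
  exact ⟨by omega, fun _ => hsign g, fun _ => hsign gd⟩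

/-- Let `R` be an irreducible reduced root system and `α ∈ R`.  The reflection `s_α`, acting
on the set `{±1}\R` of orbits of negation on `R`, has exactly
`1 + (number of roots orthogonal to α)/2` fixed points; consequently, if `α` is long
(including the simply laced case) the sign of `s_α` on `{±1}\R` is `(-1)^g`, where `g` is the
dual Coxeter number of `R` (characterised by: the number of roots not orthogonal to a long
root is `4g - 6`), and if `α` is short it is `(-1)^{g∨}`, where `g∨` is the dual Coxeter
number of the dual root system (characterised by: the number of roots not orthogonal to a
short root is `4g∨ - 6`). -/
theorem reflection_fixed_points_and_sign_on_neg_quotient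
    {V : Type*} [NormedAddCommGroup V] [InnerProductSpace ℝ V] [FiniteDimensional ℝ V]
    (Rs : RootSystemData V) (hirr : Rs.IsIrreducible)
    (α : V) (hα : α ∈ Rs.carrier)
    (hinv : ∀ β ∈ Rs.carrier, reflRoot α β ∈ Rs.carrier)
    (σ : Equiv.Perm (Quotient (negSetoidOn Rs.carrier)))
    (hσ : ∀ x : {x : V // x ∈ Rs.carrier},
      σ (Quotient.mk (negSetoidOn Rs.carrier) x) =
        Quotient.mk (negSetoidOn Rs.carrier) ⟨reflRoot α x.1, hinv x.1 x.2⟩)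
    (g gd : ℕ) :
    Nat.card {ω : Quotient (negSetoidOn Rs.carrier) // σ ω = ω} =
        1 + Nat.card {β : V // β ∈ Rs.carrier ∧ ⟪β, α⟫ = 0} / 2 ∧
    ((∀ β ∈ Rs.carrier, ‖β‖ ≤ ‖α‖) →
      Nat.card {β : V // β ∈ Rs.carrier ∧ ⟪β, α⟫ ≠ 0} + 6 = 4 * g →
      Equiv.Perm.sign σ = (-1 : ℤˣ) ^ g) ∧
    ((∃ β ∈ Rs.carrier, ‖α‖ < ‖β‖) →
      Nat.card {β : V // β ∈ Rs.carrier ∧ ⟪β, α⟫ ≠ 0} + 6 = 4 * gd →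
      Equiv.Perm.sign σ = (-1 : ℤˣ) ^ gd) :=
  reflection_fixed_points_and_sign_on_neg_quotient_general Rs α hα hinv σ hσ g gd
end
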